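/- Under fully-connected drone mobility on f ≥ 2 cells with rates λ_m, λ_d > 0, let x be the solution of Mx = −1 with x₁ = f/λ_d and x_i = f/λ_d + (f−1)/λ_m for i ≥ 2, and let y solve My = −x. Then y₁ = f²/λ_d² + (f−1)²/(λ_d λ_m). -/

import Mathlib

open Matrix

theorem stmt_7 (f : ℕ) (hf : 2 ≤ f) (lam_m lam_d : ℝ) (hm : 0 < lam_m) (hd : 0 < lam_d)
    (M : Matrix (Fin f) (Fin f) ℝ)
    (hM : M = fun i j =>
      if i = j then (if i = (⟨0, by omega⟩ : Fin f) then -(lam_m + lam_d) else -lam_m)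
      else lam_m / ((f : ℝ) - 1))
    (x : Fin f → ℝ)
    (hx : x = fun i => if i = (⟨0, by omega⟩ : Fin f) then (f : ℝ) / lam_d
      else (f : ℝ) / lam_d + ((f : ℝ) - 1) / lam_m)
    (y : Fin f → ℝ) (hy : M *ᵥ y = -x) :
    y ⟨0, by omega⟩ = (f : ℝ) ^ 2 / lam_d ^ 2 + ((f : ℝ) - 1) ^ 2 / (lam_d * lam_m) := by
  set z : Fin f := ⟨0, by omega⟩ with hz
  have hfR : (2:ℝ) ≤ (f:ℝ) := by exact_mod_cast hf
  have hf1 : (f:ℝ) - 1 ≠ 0 := by linarith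
  set c : ℝ := lam_m / ((f:ℝ) - 1) with hc
  -- column sums
  have hcol : ∀ j : Fin f, ∑ i : Fin f, M i j = if j = z then -lam_d else 0 := by
    intro j
    have h1 : ∀ i : Fin f, M i j =
        (if i = j then (if i = z then -(lam_m + lam_d) else -lam_m) - c else 0) + c := by
      intro i
      simp only [hM]
      split <;> simp
    rw [Finset.sum_congr rfl fun i _ => h1 i, Finset.sum_add_distrib,
      Finset.sum_ite_eq' Finset.univ j, Finset.sum_const]
    simp only [Finset.mem_univ, if_true, Finset.card_univ, Fintype.card_fin, nsmul_eq_mul]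
    have hcm : ((f:ℝ) - 1) * c = lam_m := by
      rw [hc]; field_simp
    split
    · linarith [hcm]
    · linarith [hcm]
  -- sum both sides of hy
  have hsum := congrArg (fun v => ∑ i, v i) hy
  simp only [mulVec, dotProduct] at hsum
  rw [Finset.sum_comm] at hsum
  have hL : ∑ j : Fin f, ∑ i : Fin f, M i j * y j = -lam_d * y z := by
    have : ∀ j : Fin f, ∑ i : Fin f, M i j * y j = (if j = z then -lam_d else 0) * y j := by
      intro j; rw [← Finset.sum_mul, hcol j]
    rw [Finset.sum_congr rfl fun j _ => this j]
    simp only [ite_mul, zero_mul, Finset.sum_ite_eq', Finset.mem_univ, if_true]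
  rw [hL] at hsum
  -- compute RHS sum
  have hR : ∑ i : Fin f, (-x) i = -((f:ℝ)^2 / lam_d + ((f:ℝ)-1)^2 / lam_m) := by
    have h2 : ∀ i : Fin f, (-x) i =
        (if i = z then ((f:ℝ)-1)/lam_m else 0) + (-((f:ℝ)/lam_d + ((f:ℝ)-1)/lam_m)) := by
      intro i
      simp only [hx, Pi.neg_apply]
      split
      · field_simp; ring
      · ring
    rw [Finset.sum_congr rfl fun i _ => h2 i, Finset.sum_add_distrib,
      Finset.sum_ite_eq' Finset.univ z, Finset.sum_const]
    simp only [Finset.mem_univ, if_true, Finset.card_univ, Fintype.card_fin, nsmul_eq_mul]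
    field_simp
    ring
  rw [hR] at hsum
  have hld : lam_d ≠ 0 := ne_of_gt hd
  have : y z = ((f:ℝ)^2 / lam_d + ((f:ℝ)-1)^2 / lam_m) / lam_d := by
    field_simp at hsum ⊢
    linarith [hsum]
  rw [show y (⟨0, by omega⟩ : Fin f) = y z from rfl, this]
  field_simp
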